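/- arXiv:1802.05746 — 7 statements merged into one kernel-verified Lean document; each statement's English description precedes it below -/
import Mathlib

section
/- Let (Z,U) be a uniform space whose uniformity has a countable base. If (Z,U) is Hurewicz bounded, then Z is σ-totally bounded. -/
open Filter Set

/-- A uniform space is ω-bounded if every entourage admits a countable set of
centers whose balls cover the space. -/
def OmegaBounded (Z : Type*) [UniformSpace Z] : Prop :=
  ∀ U ∈ uniformity Z, ∃ A : Set Z, A.Countable ∧ ∀ z : Z, ∃ a ∈ A, (a, z) ∈ U

/-- Menger boundedness of a uniform space. -/
def MengerBounded (Z : Type*) [UniformSpace Z] : Prop :=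
  ∀ U : ℕ → Set (Z × Z), (∀ n, U n ∈ uniformity Z) →
    ∃ F : ℕ → Finset Z, ∀ z : Z, ∃ n : ℕ, ∃ a ∈ F n, (a, z) ∈ U n

/-- Hurewicz boundedness of a uniform space. -/
def HurewiczBounded (Z : Type*) [UniformSpace Z] : Prop :=
  ∀ U : ℕ → Set (Z × Z), (∀ n, U n ∈ uniformity Z) →
    ∃ F : ℕ → Finset Z, ∀ z : Z, ∀ᶠ n in Filter.atTop, ∃ a ∈ F n, (a, z) ∈ U n

/-- Rothberger boundedness of a uniform space. -/
def RothbergerBounded (Z : Type*) [UniformSpace Z] : Prop :=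
  ∀ U : ℕ → Set (Z × Z), (∀ n, U n ∈ uniformity Z) →
    ∃ x : ℕ → Z, ∀ z : Z, ∃ n : ℕ, (x n, z) ∈ U n

/-- σ-total boundedness: the space is a countable union of totally bounded subsets. -/
def SigmaTotallyBounded (Z : Type*) [UniformSpace Z] : Prop :=
  ∃ S : ℕ → Set Z, (∀ n, TotallyBounded (S n)) ∧ (⋃ n, S n) = Set.univ

/-- The uniformity has a countable base. -/
def HasCountableUniformBase (Z : Type*) [UniformSpace Z] : Prop :=
  ∃ B : ℕ → Set (Z × Z), (∀ n, B n ∈ uniformity Z) ∧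
    ∀ U ∈ uniformity Z, ∃ n, B n ⊆ U

/-- With a countable base of the uniformity, Hurewicz boundedness implies σ-total boundedness. -/
theorem sigmaTotallyBounded_of_hurewiczBounded {Z : Type*} [UniformSpace Z]
    (hbase : HasCountableUniformBase Z) (h : HurewiczBounded Z) :
    SigmaTotallyBounded Z := by
  obtain ⟨B, hB, hBbase⟩ := hbase
  -- decreasing intersections of the base
  set C : ℕ → Set (Z × Z) := fun n => ⋂ k ∈ Finset.range (n + 1), B k with hC
  have hCmem : ∀ n, C n ∈ uniformity Z := by
    intro n
    exact (Filter.biInter_finset_mem _).2 fun k _ => hB k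
  have hCsub : ∀ n k, k ≤ n → C n ⊆ B k := by
    intro n k hk
    exact Set.biInter_subset_of_mem (Finset.mem_range.2 (Nat.lt_succ_of_le hk))
  obtain ⟨F, hF⟩ := h C hCmem
  refine ⟨fun m => {z | ∀ n, m ≤ n → ∃ a ∈ F n, (a, z) ∈ C n}, ?_, ?_⟩
  · intro m
    intro d hd
    obtain ⟨k, hk⟩ := hBbase (Prod.swap ⁻¹' d) (tendsto_swap_uniformity hd)
    set N := max m k
    refine ⟨↑(F N), (F N).finite_toSet, ?_⟩
    intro z hz
    obtain ⟨a, ha, haz⟩ := hz N (le_max_left _ _)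
    refine Set.mem_iUnion₂.2 ⟨a, ha, ?_⟩
    exact hk (hCsub N k (le_max_right _ _) haz)
  · ext z
    simp only [Set.mem_iUnion, Set.mem_univ, iff_true, Set.mem_setOf_eq]
    obtain ⟨m, hm⟩ := (Filter.eventually_atTop).1 (hF z)
    exact ⟨m, fun n hn => hm n hn⟩
end

section
/- Let (Z,U) be a uniform space with a countable base. Then (Z,U) is Hurewicz bounded if and only if Z is σ-totally bounded. -/
open Filter Set

/-- With a countable base of the uniformity, Hurewicz boundedness is equivalent to
σ-total boundedness. -/
theorem hurewiczBounded_iff_sigmaTotallyBounded {Z : Type*} [UniformSpace Z]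
    (hbase : HasCountableUniformBase Z) :
    HurewiczBounded Z ↔ SigmaTotallyBounded Z := by
  classical
  obtain ⟨B, hBmem, hBsub⟩ := hbase
  constructor
  · intro h
    set C : ℕ → Set (Z × Z) := fun n => ⋂ i ∈ Finset.range (n + 1), B i with hC
    have hCmem : ∀ n, C n ∈ uniformity Z := fun n =>
      (Filter.biInter_mem (Finset.range (n + 1)).finite_toSet).2 fun i _ => hBmem i
    obtain ⟨F, hF⟩ := h C hCmem
    refine ⟨fun m => {z | ∀ n ≥ m, ∃ a ∈ F n, (a, z) ∈ C n}, ?_, ?_⟩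
    · intro m d hd
      have hd' : Prod.swap ⁻¹' d ∈ uniformity Z := tendsto_swap_uniformity hd
      obtain ⟨n0, hn0⟩ := hBsub _ hd'
      refine ⟨↑(F (max n0 m)), (F (max n0 m)).finite_toSet, ?_⟩
      intro z hz
      obtain ⟨a, ha, haz⟩ := hz (max n0 m) (le_max_right _ _)
      refine Set.mem_biUnion ha ?_
      have hB0 : (a, z) ∈ B n0 := by
        refine Set.mem_iInter₂.1 haz n0 ?_
        simp only [Finset.mem_coe, Finset.mem_range]
        omega
      exact hn0 hB0
    · ext z
      simp only [Set.mem_iUnion, Set.mem_univ, iff_true, Set.mem_setOf_eq]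
      exact Filter.eventually_atTop.1 (hF z)
  · intro h U hU
    obtain ⟨S, hStb, hScov⟩ := h
    have key : ∀ n k, ∃ t : Finset Z, S k ⊆ ⋃ a ∈ t, {z | (a, z) ∈ U n} := by
      intro n k
      have hU' : Prod.swap ⁻¹' (U n) ∈ uniformity Z := tendsto_swap_uniformity (hU n)
      obtain ⟨t, htfin, hts⟩ := hStb k _ hU'
      refine ⟨htfin.toFinset, fun z hz => ?_⟩
      obtain ⟨a, ha, haz⟩ := Set.mem_iUnion₂.1 (hts hz)
      exact Set.mem_iUnion₂.2 ⟨a, htfin.mem_toFinset.2 ha, haz⟩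
    choose t ht using key
    refine ⟨fun n => (Finset.range (n + 1)).biUnion fun k => t n k, ?_⟩
    intro z
    have hz : z ∈ ⋃ k, S k := hScov ▸ Set.mem_univ z
    obtain ⟨m, hm⟩ := Set.mem_iUnion.1 hz
    refine Filter.eventually_atTop.2 ⟨m, fun n hn => ?_⟩
    obtain ⟨a, ha, haz⟩ := Set.mem_iUnion₂.1 (ht n m hm)
    exact ⟨a, Finset.mem_biUnion.2 ⟨m, Finset.mem_range.2 (by omega), ha⟩, haz⟩
end

section
/- Let (Z,U) be a uniform space with a countable base in which player TWO has a winning strategy in the Menger boundedness game (in each round n, ONE picks an entourage U_n and TWO picks a finite set A_n ⊆ Z; TWO wins if Z = ⋃_n U_n[A_n]). Then Z is σ-totally bounded. -/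
open Filter Set

/-- A strategy for player TWO in the Menger boundedness game: given the entourages
played by ONE in the first `n+1` rounds, TWO answers with a finite set. -/
def MengerStrategy (Z : Type*) : Type _ :=
  ∀ n : ℕ, (Fin (n + 1) → Set (Z × Z)) → Finset Z

/-- The strategy `σ` is winning for TWO in the Menger boundedness game. -/
def MengerWinning {Z : Type*} [UniformSpace Z] (σ : MengerStrategy Z) : Prop :=
  ∀ U : ℕ → Set (Z × Z), (∀ n, U n ∈ uniformity Z) →
    ∀ z : Z, ∃ n : ℕ, ∃ a ∈ σ n (fun i => U i), (a, z) ∈ U n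

/-- A strategy for player TWO in the Hurewicz boundedness game. -/
def HurewiczStrategy (Z : Type*) : Type _ :=
  ∀ n : ℕ, (Fin (n + 1) → Set (Z × Z)) → Finset Z

/-- The strategy `σ` is winning for TWO in the Hurewicz boundedness game. -/
def HurewiczWinning {Z : Type*} [UniformSpace Z] (σ : HurewiczStrategy Z) : Prop :=
  ∀ U : ℕ → Set (Z × Z), (∀ n, U n ∈ uniformity Z) →
    ∀ z : Z, ∀ᶠ n in Filter.atTop, ∃ a ∈ σ n (fun i => U i), (a, z) ∈ U n

/-- A strategy for player TWO in the Rothberger boundedness game: TWO answers with a point. -/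
def RothbergerStrategy (Z : Type*) : Type _ :=
  ∀ n : ℕ, (Fin (n + 1) → Set (Z × Z)) → Z

/-- The strategy `σ` is winning for TWO in the Rothberger boundedness game. -/
def RothbergerWinning {Z : Type*} [UniformSpace Z] (σ : RothbergerStrategy Z) : Prop :=
  ∀ U : ℕ → Set (Z × Z), (∀ n, U n ∈ uniformity Z) →
    ∀ z : Z, ∃ n : ℕ, (σ n (fun i => U i), z) ∈ U n


/-- Auxiliary: the set of points captured at round `k` by TWO's strategy response,
no matter which base entourage ONE plays at round `k`. -/
def gameSet {Z : Type*} (σ : MengerStrategy Z) (B : ℕ → Set (Z × Z))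
    (t : ℕ → ℕ) (k : ℕ) : Set Z :=
  { z | ∀ n : ℕ,
      ∃ a ∈ σ k (fun i : Fin (k + 1) => if (i : ℕ) < k then B (t i) else B n),
        (a, z) ∈ B n }

theorem gameSet_congr {Z : Type*} (σ : MengerStrategy Z) (B : ℕ → Set (Z × Z))
    {t t' : ℕ → ℕ} {k : ℕ} (hag : ∀ i < k, t i = t' i) :
    gameSet σ B t k = gameSet σ B t' k := by
  have : (fun (n : ℕ) => (fun i : Fin (k + 1) => if (i : ℕ) < k then B (t i) else B n))
      = fun (n : ℕ) => (fun i : Fin (k + 1) => if (i : ℕ) < k then B (t' i) else B n) := by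
    funext n i
    by_cases h : (i : ℕ) < k
    · simp [h, hag i h]
    · simp [h]
  unfold gameSet
  ext z
  simp only [Set.mem_setOf_eq]
  refine forall_congr' fun n => ?_
  rw [congrFun this n]

/-- Auxiliary: recursively build a play for ONE from a choice function. -/
noncomputable def buildSeq (N : (ℕ → ℕ) → ℕ → ℕ) : ℕ → ℕ
  | k => N (fun i => if h : i < k then buildSeq N i else 0) k
termination_by k => k
decreasing_by exact h

/-- If the uniformity has a countable base and TWO has a winning strategy in the Menger
boundedness game, then the space is σ-totally bounded. -/
theorem sigmaTotallyBounded_of_menger_winning {Z : Type*} [UniformSpace Z]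
    (hbase : HasCountableUniformBase Z)
    (h : ∃ σ : MengerStrategy Z, MengerWinning σ) :
    SigmaTotallyBounded Z := by
  obtain ⟨σ, hσ⟩ := h
  obtain ⟨B, hB, hBbase⟩ := hbase
  -- Each gameSet is totally bounded
  have htb : ∀ t k, TotallyBounded (gameSet σ B t k) := by
    intro t k U hU
    have hU' : Prod.swap ⁻¹' U ∈ uniformity Z := tendsto_swap_uniformity hU
    obtain ⟨n, hn⟩ := hBbase _ hU'
    refine ⟨(σ k (fun i : Fin (k + 1) => if (i : ℕ) < k then B (t i) else B n) :
      Finset Z), Finset.finite_toSet _, ?_⟩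
    intro z hz
    obtain ⟨a, ha, haz⟩ := hz n
    exact mem_iUnion₂.2 ⟨a, ha, hn haz⟩
  -- The countable family
  refine ⟨fun m => gameSet σ B
      (fun i => ((Denumerable.ofNat (List ℕ) m)).getD i 0)
      ((Denumerable.ofNat (List ℕ) m)).length, fun m => htb _ _, ?_⟩
  rw [Set.eq_univ_iff_forall]
  intro z
  by_contra hz
  simp only [Set.mem_iUnion, not_exists] at hz
  -- hence z avoids every gameSet
  have hall : ∀ t k, z ∉ gameSet σ B t k := by
    intro t k hmem
    set l : List ℕ := List.ofFn (fun j : Fin k => t j) with hl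
    have hlen : l.length = k := by simp [hl]
    have hag : ∀ i < k, t i = l.getD i 0 := by
      intro i hi
      rw [List.getD_eq_getElem l 0 (by omega)]
      simp [hl]
    apply hz (Encodable.encode l)
    rw [Denumerable.ofNat_encode, hlen]
    rw [← gameSet_congr σ B hag]
    exact hmem
  -- choice of defeating moves
  have hch : ∀ (t : ℕ → ℕ) (k : ℕ), ∃ n : ℕ,
      ¬ ∃ a ∈ σ k (fun i : Fin (k + 1) => if (i : ℕ) < k then B (t i) else B n),
        (a, z) ∈ B n := by
    intro t k
    have := hall t k
    simpa [gameSet, Set.mem_setOf_eq, not_forall] using this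
  choose N hN using hch
  set t : ℕ → ℕ := buildSeq N with ht
  have hteq : ∀ k, t k = N (fun i => if h : i < k then t i else 0) k := by
    intro k
    rw [ht]
    rw [buildSeq]
  -- the play B ∘ t defeats the strategy
  obtain ⟨k, a, ha, haz⟩ := hσ (fun i => B (t i)) (fun n => hB _) z
  set tk : ℕ → ℕ := fun i => if h : i < k then t i else 0 with htk
  have h1 := hN tk k
  rw [← hteq k] at h1
  apply h1
  refine ⟨a, ?_, haz⟩
  have : (fun i : Fin (k + 1) => if (i : ℕ) < k then B (tk i) else B (t k))
      = fun i : Fin (k + 1) => B (t i) := by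
    funext i
    by_cases hik : (i : ℕ) < k
    · simp [htk, hik]
    · have : (i : ℕ) = k := by omega
      simp [this, hik]
  rw [this]
  exact ha
end

section
/- Let X be a Tychonoff topological space and (Y,d) a metric space. The uniform space (C(X,Y), U_p) of continuous functions with the uniformity of pointwise convergence is ω-bounded if and only if (Y,d) is separable. -/
open Filter Set

open scoped UniformConvergence

/-- The uniformity of pointwise convergence on `C(X, Y)`. -/
noncomputable def pointwiseUniformity (X Y : Type*) [TopologicalSpace X] [MetricSpace Y] :
    UniformSpace C(X, Y) :=
  UniformSpace.comap (fun f : C(X, Y) => (f : X → Y)) (Pi.uniformSpace fun _ => Y)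

section Work
open Filter Set

variable {X Y : Type*} [TopologicalSpace X] [MetricSpace Y]

/-- Extraction: every entourage of the pointwise uniformity contains a basic
entourage determined by a finite set and a positive `ε`. -/
theorem pointwise_entourage_basis {U : Set (C(X, Y) × C(X, Y))}
    (hU : U ∈ @uniformity C(X, Y) (pointwiseUniformity X Y)) :
    ∃ (F : Finset X) (ε : ℝ), 0 < ε ∧
      {p : C(X, Y) × C(X, Y) | ∀ x ∈ F, dist (p.1 x) (p.2 x) < ε} ⊆ U := by
  rw [pointwiseUniformity, uniformity_comap] at hU
  rcases Filter.mem_comap.mp hU with ⟨t, ht, hsub⟩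
  rw [Pi.uniformity, Filter.mem_iInf] at ht
  rcases ht with ⟨I, Ifin, V, hV, rfl⟩
  haveI := Ifin.fintype
  choose W hW hWV using fun i : I => Filter.mem_comap.mp (hV i)
  choose ε hε hball using fun i : I => Metric.mem_uniformity_dist.mp (hW i)
  rcases isEmpty_or_nonempty I with h | h
  · refine ⟨∅, 1, one_pos, fun p _ => hsub ?_⟩
    simp [Set.iInter_of_empty]
  · haveI : Nonempty (I : Set X) := h
    refine ⟨Ifin.toFinset, Finset.univ.inf' Finset.univ_nonempty ε,
      (Finset.lt_inf'_iff _).mpr fun i _ => hε i, fun p hp => hsub ?_⟩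
    refine Set.mem_iInter.mpr fun i => hWV i ?_
    refine Set.mem_preimage.mpr (hball i ?_)
    exact lt_of_lt_of_le (hp i.1 (Ifin.mem_toFinset.mpr i.2))
      (Finset.inf'_le _ (Finset.mem_univ i))

theorem pointwise_eval_entourage (x₀ : X) {ε : ℝ} (hε : 0 < ε) :
    {p : C(X, Y) × C(X, Y) | dist (p.1 x₀) (p.2 x₀) < ε} ∈
      @uniformity C(X, Y) (pointwiseUniformity X Y) := by
  rw [pointwiseUniformity, uniformity_comap]
  refine Filter.mem_comap.mpr ⟨(fun q : (X → Y) × (X → Y) => (q.1 x₀, q.2 x₀)) ⁻¹'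
    {q : Y × Y | dist q.1 q.2 < ε}, ?_, fun p hp => hp⟩
  rw [Pi.uniformity]
  exact Filter.mem_iInf_of_mem x₀ (Filter.preimage_mem_comap (Metric.dist_mem_uniformity hε))

end Work

/-- For a nonempty Tychonoff space `X` and a metric space `Y`, the space `C(X,Y)` with
the uniformity of pointwise convergence is ω-bounded iff `Y` is separable. -/
theorem pointwise_omegaBounded_iff_separable (X Y : Type*) [TopologicalSpace X] [Nonempty X]
    [CompletelyRegularSpace X] [T1Space X] [MetricSpace Y] :
    @OmegaBounded C(X, Y) (pointwiseUniformity X Y) ↔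
      TopologicalSpace.SeparableSpace Y := by
  constructor
  · intro h
    obtain ⟨x₀⟩ := ‹Nonempty X›
    choose A hAc hAcov using fun n : ℕ =>
      h _ (pointwise_eval_entourage x₀ (by positivity : (0:ℝ) < 1 / (n + 1)))
    refine ⟨⟨⋃ n : ℕ, (fun a : C(X, Y) => a x₀) '' A n,
      countable_iUnion fun n => (hAc n).image _, ?_⟩⟩
    intro y
    rw [Metric.mem_closure_iff]
    intro ε hε
    obtain ⟨n, hn⟩ := exists_nat_one_div_lt hε
    obtain ⟨a, haA, ha⟩ := hAcov n (ContinuousMap.const X y)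
    refine ⟨a x₀, Set.mem_iUnion.mpr ⟨n, Set.mem_image_of_mem _ haA⟩, ?_⟩
    rw [dist_comm]
    exact lt_trans ha hn
  · intro sep U hU
    obtain ⟨F, ε, hε, hsub⟩ := pointwise_entourage_basis hU
    haveI : SecondCountableTopology Y :=
      UniformSpace.secondCountable_of_separable Y
    set φ : C(X, Y) → (F → Y) := fun f x => f x with hφ
    have hsurj : ∀ t : Set.range φ, ∃ g : C(X, Y), φ g = (t : F → Y) := fun t => t.2
    choose g hg using hsurj
    obtain ⟨s, s_cnt, s_dense⟩ := TopologicalSpace.exists_countable_dense (Set.range φ)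
    refine ⟨g '' s, s_cnt.image g, fun z => ?_⟩
    have hw : (⟨φ z, Set.mem_range_self z⟩ : Set.range φ) ∈ closure s :=
      s_dense _
    rw [Metric.mem_closure_iff] at hw
    obtain ⟨t, hts, htd⟩ := hw ε hε
    refine ⟨g t, Set.mem_image_of_mem g hts, hsub fun x hx => ?_⟩
    have h1 : dist (g t x) (z x) = dist (φ (g t) ⟨x, hx⟩) (φ z ⟨x, hx⟩) := rfl
    rw [h1, hg t]
    calc dist ((t : F → Y) ⟨x, hx⟩) (φ z ⟨x, hx⟩)
        ≤ dist (t : F → Y) (φ z) := dist_le_pi_dist _ _ _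
      _ = dist (⟨φ z, Set.mem_range_self z⟩ : Set.range φ) t := by
          rw [Subtype.dist_eq, dist_comm]
      _ < ε := htd
end

section
/- Let X be a pseudocompact Tychonoff space and (Y,d) a hemicompact metric space. Then C(X,Y) with the topology of pointwise convergence is homeomorphic to a subspace of a σ-compact space (namely ⋃_n K_n^X for a cofinal sequence of compacts K_n), and hence (C(X,Y), U_p) is σ-totally bounded and strictly Hurewicz bounded. -/
/-! A continuous image of a pseudocompact space in a metrizable space is pseudocompact, hence
countably compact (an infinite closed discrete set would carry, by Tietze, an unbounded function),
hence compact. So every `f : C(X, Y)` takes values in some `K n`, i.e. `C(X, Y)` sits inside the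
σ-compact subspace `⋃ n, K n ^ X` of the product `Y ^ X`, whose topology and uniformity induce
the pointwise ones. The pieces `K n ^ X` are compact, so their traces on `C(X, Y)` are totally
bounded, and answering in round `n` with a finite net of the `n`-th partial union wins the
Hurewicz game for TWO. -/

open Filter Set

open scoped UniformConvergence

/-- A topological space is pseudocompact if every continuous real-valued function on it
is bounded. -/
def Pseudocompact (X : Type*) [TopologicalSpace X] : Prop :=
  ∀ f : C(X, ℝ), ∃ C : ℝ, ∀ x : X, |f x| ≤ C

/-- A topological space is hemicompact if it has a sequence of compact sets cofinal
in all compact sets. -/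
def Hemicompact (Y : Type*) [TopologicalSpace Y] : Prop :=
  ∃ K : ℕ → Set Y, (∀ n, IsCompact (K n)) ∧ ∀ S : Set Y, IsCompact S → ∃ n, S ⊆ K n

universe u v

open Topology

namespace Pseudocompact

variable {X Z : Type*} [TopologicalSpace X] [TopologicalSpace Z]

theorem range (hX : Pseudocompact X) (f : C(X, Z)) : Pseudocompact (Set.range f) := by
  intro g
  obtain ⟨C, hC⟩ := hX (g.comp ⟨_, f.continuous.subtype_mk Set.mem_range_self⟩)
  exact ⟨C, fun ⟨_, x, rfl⟩ => hC x⟩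

/-- Otherwise Tietze extends a surjection `B → ℕ` (continuous, `B` being discrete) to an unbounded
function on `Z`. -/
theorem finite_of_isClosed_of_isDiscrete [NormalSpace Z] (hZ : Pseudocompact Z) {B : Set Z}
    (hBc : IsClosed B) (hBd : IsDiscrete B) : B.Finite := by
  by_contra hB
  have := isDiscrete_iff_discreteTopology.1 hBd
  have := Set.infinite_coe_iff.2 hB
  set index : B → ℕ := Function.invFun (Infinite.natEmbedding B)
  obtain ⟨g, hg⟩ := ContinuousMap.exists_restrict_eq hBc
    ⟨fun b => (index b : ℝ), continuous_of_discreteTopology⟩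
  obtain ⟨C, hC⟩ := hZ g
  obtain ⟨b, hb⟩ := Function.invFun_surjective (Infinite.natEmbedding B).injective (⌈C⌉₊ + 1)
  have hgb : g b = index b := DFunLike.congr_fun hg b
  have hbC := (le_abs_self _).trans (hC b)
  rw [hgb, show index b = ⌈C⌉₊ + 1 from hb] at hbC
  push_cast at hbC
  linarith [Nat.le_ceil C]

theorem countablyCompactSpace [NormalSpace Z] [T1Space Z] (hZ : Pseudocompact Z) :
    CountablyCompactSpace Z := by
  refine ⟨isCountablyCompact_iff_infinite_subset_has_accPt.2 fun B _ hB => ?_⟩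
  by_contra! hacc
  obtain ⟨hBc, hBd⟩ : IsClosed B ∧ IsDiscrete B :=
    isClosed_and_discrete_iff.2 fun x => disjoint_iff.2 (Filter.not_neBot.1 (hacc x trivial))
  exact hB (hZ.finite_of_isClosed_of_isDiscrete hBc hBd)

theorem compactSpace [TopologicalSpace.MetrizableSpace Z] (hZ : Pseudocompact Z) :
    CompactSpace Z :=
  have := hZ.countablyCompactSpace
  compactSpace_iff_seqCompactSpace.2 inferInstance

theorem isCompact_range [TopologicalSpace.MetrizableSpace Z] (hX : Pseudocompact X)
    (f : C(X, Z)) : IsCompact (Set.range f) :=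
  isCompact_iff_compactSpace.2 (hX.range f).compactSpace

end Pseudocompact

section UniformSpace

-- The instance binders `uZ`, `tZ` are named so that `pointwiseUniformity` can be supplied.
variable {Z : Type*} [uZ : UniformSpace Z]

theorem TotallyBounded.exists_finset_forall_mem_uniformity {s : Set Z} (hs : TotallyBounded s)
    {U : Set (Z × Z)} (hU : U ∈ uniformity Z) : ∃ F : Finset Z, ∀ z ∈ s, ∃ a ∈ F, (a, z) ∈ U := by
  obtain ⟨t, ht, hst⟩ := hs _ (symm_le_uniformity hU)
  refine ⟨ht.toFinset, fun z hz => ?_⟩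
  obtain ⟨a, ha, hza⟩ := mem_iUnion₂.1 (hst hz)
  exact ⟨a, ht.mem_toFinset.2 ha, hza⟩

/-- TWO answers in round `n` with a finite `U n`-net of the `n`-th partial union. -/
theorem SigmaTotallyBounded.exists_hurewiczWinning (h : SigmaTotallyBounded Z) :
    ∃ σ : HurewiczStrategy Z, HurewiczWinning σ := by
  obtain ⟨S, hS, hcov⟩ := h
  have hnet : ∀ n (U : Set (Z × Z)), ∃ F : Finset Z,
      U ∈ uniformity Z → ∀ z ∈ accumulate S n, ∃ a ∈ F, (a, z) ∈ U := by
    intro n U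
    by_cases hU : U ∈ uniformity Z
    · obtain ⟨F, hF⟩ := ((totallyBounded_biUnion (finite_le_nat n)).2 fun i _ => hS i)
        |>.exists_finset_forall_mem_uniformity hU
      exact ⟨F, fun _ => hF⟩
    · exact ⟨∅, fun h => absurd h hU⟩
  choose F hF using hnet
  refine ⟨fun n V => F n (V (Fin.last n)), fun U hU z => ?_⟩
  obtain ⟨m, hm⟩ := mem_iUnion.1 (hcov.symm ▸ mem_univ z : z ∈ ⋃ n, S n)
  filter_upwards [eventually_ge_atTop m] with n hn
  exact hF n (U n) (hU n) z (monotone_accumulate hn (subset_accumulate hm))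

theorem IsUniformInducing.sigmaTotallyBounded {W : Type*} [UniformSpace W] {φ : Z → W}
    (hφ : IsUniformInducing φ) {S : ℕ → Set W} (hS : ∀ n, TotallyBounded (S n))
    (hcov : Set.range φ ⊆ ⋃ n, S n) : SigmaTotallyBounded Z :=
  ⟨fun n => φ ⁻¹' S n, fun n => totallyBounded_preimage hφ (hS n),
    eq_univ_of_forall fun z => by simpa using hcov (mem_range_self z)⟩

end UniformSpace

universe w

theorem Topology.IsEmbedding.exists_sigmaCompactSpace {Z : Type*} {W : Type w}
    [tZ : TopologicalSpace Z] [TopologicalSpace W] {φ : Z → W} (hφ : IsEmbedding φ) {s : Set W}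
    (hs : IsSigmaCompact s) (hφs : ∀ z, φ z ∈ s) :
    ∃ (S : Type w) (_ : TopologicalSpace S), SigmaCompactSpace S ∧ ∃ e : Z → S, IsEmbedding e :=
  ⟨s, inferInstance, isSigmaCompact_iff_sigmaCompactSpace.1 hs, _, hφ.codRestrict s hφs⟩

theorem isUniformEmbedding_coe_pointwiseUniformity (X Y : Type*) [TopologicalSpace X]
    [MetricSpace Y] :
    @IsUniformEmbedding _ _ (pointwiseUniformity X Y) _ (fun f : C(X, Y) => (f : X → Y)) :=
  @IsUniformEmbedding.mk _ _ (pointwiseUniformity X Y) _ _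
    (@IsUniformInducing.mk _ _ (pointwiseUniformity X Y) _ _ rfl) DFunLike.coe_injective

theorem pointwise_sigmaTotallyBounded_of_pseudocompact_general
    (X : Type u) (Y : Type v) [TopologicalSpace X]
    [MetricSpace Y] (hX : Pseudocompact X) (hY : Hemicompact Y) :
    (∃ (S : Type (max u v)) (_ : TopologicalSpace S),
        SigmaCompactSpace S ∧
          ∃ e : C(X, Y) → S,
            @Topology.IsEmbedding _ _ (pointwiseUniformity X Y).toTopologicalSpace _ e) ∧
      @SigmaTotallyBounded C(X, Y) (pointwiseUniformity X Y) ∧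
        ∃ σ : HurewiczStrategy C(X, Y),
          @HurewiczWinning C(X, Y) (pointwiseUniformity X Y) σ := by
  obtain ⟨K, hK, hKcof⟩ := hY
  have hKpi (n : ℕ) : IsCompact (univ.pi fun _ : X => K n) := isCompact_univ_pi fun _ => hK n
  have hmem (f : C(X, Y)) : (f : X → Y) ∈ ⋃ n, univ.pi fun _ : X => K n := by
    obtain ⟨n, hn⟩ := hKcof _ (hX.isCompact_range f)
    exact mem_iUnion.2 ⟨n, fun x _ => hn (mem_range_self x)⟩
  have hcoe := isUniformEmbedding_coe_pointwiseUniformity X Y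
  have hσ := IsUniformInducing.sigmaTotallyBounded (uZ := pointwiseUniformity X Y)
    (@IsUniformEmbedding.isUniformInducing _ _ (pointwiseUniformity X Y) _ _ hcoe)
    (fun n => (hKpi n).totallyBounded) (range_subset_iff.2 hmem)
  exact ⟨(@IsUniformEmbedding.isEmbedding _ _ (pointwiseUniformity X Y) _ _ hcoe)
      |>.exists_sigmaCompactSpace (tZ := _) (isSigmaCompact_iUnion_of_isCompact _ hKpi) hmem,
    hσ, hσ.exists_hurewiczWinning (uZ := _)⟩

/-- For pseudocompact Tychonoff `X` and hemicompact metric `Y`, the space `C(X,Y)` with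
the topology of pointwise convergence embeds in a σ-compact space, and with the uniformity
of pointwise convergence it is σ-totally bounded and strictly Hurewicz bounded. -/
theorem pointwise_sigmaTotallyBounded_of_pseudocompact
    (X : Type u) (Y : Type v) [TopologicalSpace X] [CompletelyRegularSpace X] [T1Space X]
    [MetricSpace Y] (hX : Pseudocompact X) (hY : Hemicompact Y) :
    (∃ (S : Type (max u v)) (_ : TopologicalSpace S),
        SigmaCompactSpace S ∧
          ∃ e : C(X, Y) → S,
            @Topology.IsEmbedding _ _ (pointwiseUniformity X Y).toTopologicalSpace _ e) ∧
      @SigmaTotallyBounded C(X, Y) (pointwiseUniformity X Y) ∧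
        ∃ σ : HurewiczStrategy C(X, Y),
          @HurewiczWinning C(X, Y) (pointwiseUniformity X Y) σ :=
  pointwise_sigmaTotallyBounded_of_pseudocompact_general X Y hX hY
end

section
/- Let (Y,d) be an unbounded σ-totally bounded metric space. Then Y^ℕ with the product uniformity is not Menger bounded, although each finite power Y^n is σ-totally bounded (hence strictly Hurewicz bounded). -/
open Filter Set

/-!
The positive half rests on the fact that a product of totally bounded sets is totally bounded
(an ultrafilter on the product is Cauchy as soon as its coordinate images are): covering `Y` by
an increasing sequence of totally bounded sets, their finite powers cover `Y^n`, and on the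
`n`-th round TWO answers with a finite net of the `n`-th of these sets.

For the negative half, a diagonal argument: an unbounded metric space is not totally bounded,
so it has an entourage `V` no finitely many of whose balls cover it. Given the finite sets `F n`
chosen against the entourages `{(a, z) | (z n, a n) ∈ V}`, pick the `n`-th coordinate of `z`
outside the `V`-balls around the `n`-th coordinates of the points of `F n`.
-/

open scoped Uniformity

theorem TotallyBounded.univ_pi {ι : Type*} {α : ι → Type*} [∀ i, UniformSpace (α i)]
    {s : ∀ i, Set (α i)} (hs : ∀ i, TotallyBounded (s i)) :
    TotallyBounded (Set.pi univ s) := by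
  refine totallyBounded_iff_ultrafilter.2 fun f hf => (cauchy_pi_iff' _).2 fun i => ?_
  have hfi : ↑(f.map (Function.eval i)) ≤ 𝓟 (s i) :=
    le_principal_iff.2 <| mem_map.2 <|
      mem_of_superset (le_principal_iff.1 hf) fun x hx => hx i (mem_univ i)
  exact totallyBounded_iff_ultrafilter.1 (hs i) _ hfi

theorem TotallyBounded.exists_finset_net {Z : Type*} [UniformSpace Z] {s : Set Z}
    (hs : TotallyBounded s) {U : Set (Z × Z)} (hU : U ∈ 𝓤 Z) :
    ∃ F : Finset Z, ∀ z ∈ s, ∃ a ∈ F, (a, z) ∈ U := by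
  obtain ⟨t, ht, hst⟩ := hs _ (tendsto_swap_uniformity hU)
  refine ⟨ht.toFinset, fun z hz => ?_⟩
  obtain ⟨a, ha, hza⟩ := mem_iUnion₂.1 (hst hz)
  exact ⟨a, ht.mem_toFinset.2 ha, hza⟩

namespace SigmaTotallyBounded

theorem exists_monotone {Z : Type*} [UniformSpace Z] (h : SigmaTotallyBounded Z) :
    ∃ A : ℕ → Set Z, Monotone A ∧ (∀ n, TotallyBounded (A n)) ∧ ⋃ n, A n = univ := by
  obtain ⟨S, hS, hS_univ⟩ := h
  refine ⟨accumulate S, monotone_accumulate, fun n => ?_, by rw [iUnion_accumulate, hS_univ]⟩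
  exact (totallyBounded_biUnion (finite_Iic n)).2 fun i _ => hS i

protected theorem pi {ι : Type*} [Finite ι] {α : ι → Type*} [∀ i, UniformSpace (α i)]
    (h : ∀ i, SigmaTotallyBounded (α i)) : SigmaTotallyBounded (∀ i, α i) := by
  choose A hA_mono hA_tb hA_univ using fun i => (h i).exists_monotone
  refine ⟨fun n => Set.pi univ fun i => A i n, fun n => TotallyBounded.univ_pi fun i => hA_tb i n,
    ?_⟩
  rw [iUnion_univ_pi_of_monotone hA_mono]
  simp [hA_univ]

theorem exists_hurewiczWinning_s15 {Z : Type*} [UniformSpace Z] (h : SigmaTotallyBounded Z) :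
    ∃ σ : HurewiczStrategy Z, HurewiczWinning σ := by
  classical
  obtain ⟨A, hA_mono, hA_tb, hA_univ⟩ := h.exists_monotone
  choose F hF using fun n (U : Set (Z × Z)) (hU : U ∈ 𝓤 Z) => (hA_tb n).exists_finset_net hU
  refine ⟨fun n U => if hU : U (Fin.last n) ∈ 𝓤 Z then F n _ hU else ∅, fun U hU z => ?_⟩
  obtain ⟨m, hm⟩ := mem_iUnion.1 (hA_univ.symm ▸ mem_univ z)
  filter_upwards [eventually_ge_atTop m] with n hn
  rw [dif_pos (show U (Fin.last n : ℕ) ∈ 𝓤 Z from hU n)]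
  exact hF n _ (hU n) z (hA_mono hn hm)

end SigmaTotallyBounded

theorem not_mengerBounded_pi_of_not_totallyBounded {Y : ℕ → Type*} [∀ n, UniformSpace (Y n)]
    (h : ∀ n, ¬ TotallyBounded (univ : Set (Y n))) : ¬ MengerBounded (∀ n, Y n) := by
  intro hM
  simp only [TotallyBounded, not_forall, not_exists, not_and, univ_subset_iff] at h
  choose V hV hV_far using h
  let U : ℕ → Set ((∀ n, Y n) × (∀ n, Y n)) := fun n => {p | (p.2 n, p.1 n) ∈ V n}
  have hU : ∀ n, U n ∈ 𝓤 (∀ n, Y n) :=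
    fun n => tendsto_swap_uniformity (Pi.uniformContinuous_proj Y n (hV n))
  obtain ⟨F, hF⟩ := hM U hU
  have hfar : ∀ n, ∃ y : Y n, ∀ a ∈ F n, (y, a n) ∉ V n := by
    intro n
    obtain ⟨y, hy⟩ := ne_univ_iff_exists_notMem _ |>.1 <|
      hV_far n _ ((F n).finite_toSet.image fun a => a n)
    simp only [mem_iUnion, mem_image, Finset.mem_coe, exists_prop, not_exists, not_and] at hy
    exact ⟨y, fun a ha => hy (a n) ⟨a, ha, rfl⟩⟩
  choose z hz using hfar
  obtain ⟨n, a, ha, haz⟩ := hF z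
  exact hz n a ha haz

/-- If `(Y,d)` is an unbounded σ-totally bounded metric space, then every finite power
`Y^n` is σ-totally bounded (and strictly Hurewicz bounded), but `Y^ℕ` with the product
uniformity is not Menger bounded. -/
theorem pi_nat_not_mengerBounded_of_unbounded_sigmaTotallyBounded
    (Y : Type*) [MetricSpace Y]
    (hunb : ¬ Bornology.IsBounded (Set.univ : Set Y))
    (hstb : SigmaTotallyBounded Y) :
    (∀ n : ℕ, SigmaTotallyBounded (Fin n → Y) ∧
        ∃ σ : HurewiczStrategy (Fin n → Y), HurewiczWinning σ) ∧
      ¬ MengerBounded (ℕ → Y) := by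
  refine ⟨fun n => ?_, ?_⟩
  · have hpow : SigmaTotallyBounded (Fin n → Y) := SigmaTotallyBounded.pi fun _ => hstb
    exact ⟨hpow, hpow.exists_hurewiczWinning_s15⟩
  · exact not_mengerBounded_pi_of_not_totallyBounded fun _ htb => hunb htb.isBounded
end

section
/- Let X be a Tychonoff space in which every compact subset is metrizable, and (Y,d) a separable metric space. Then (C(X,Y), U_k), the space of continuous functions with the uniformity of uniform convergence on compact sets, is ω-bounded. -/
open Filter Set

/-- For a Tychonoff space `X` all of whose compact subsets are metrizable and a separable
metric space `Y`, the space `C(X,Y)` with the uniformity of uniform convergence on compact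
sets (Mathlib's compact-convergence uniformity) is ω-bounded. -/
theorem compactConvergence_omegaBounded (X Y : Type*) [TopologicalSpace X]
    [CompletelyRegularSpace X] [T1Space X] [MetricSpace Y]
    [TopologicalSpace.SeparableSpace Y]
    (hmet : ∀ K : Set X, IsCompact K → TopologicalSpace.MetrizableSpace K) :
    OmegaBounded C(X, Y) := by
  intro U hU
  rw [ContinuousMap.mem_compactConvergence_entourage_iff] at hU
  obtain ⟨K, V, hK, hV, hsub⟩ := hU
  obtain ⟨ε, hε, hεV⟩ := Metric.mem_uniformity_dist.mp hV
  haveI : CompactSpace K := isCompact_iff_compactSpace.mp hK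
  haveI := hmet K hK
  letI : MetricSpace K := TopologicalSpace.metrizableSpaceMetric K
  haveI : SecondCountableTopology Y :=
    UniformSpace.secondCountable_of_separable Y
  haveI : SecondCountableTopology K := inferInstance
  haveI : LocallyCompactSpace K := inferInstance
  haveI : SecondCountableTopology C(K, Y) := inferInstance
  -- restriction map
  set r : C(X, Y) → C(K, Y) := fun f => f.restrict K with hr
  haveI : TopologicalSpace.SeparableSpace (Set.range r) := inferInstance
  obtain ⟨D, hDc, hDd⟩ := TopologicalSpace.exists_countable_dense (Set.range r)
  have hlift : ∀ d : Set.range r, ∃ f : C(X, Y), r f = (d : C(K, Y)) := fun d => d.2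
  choose lift hlift using hlift
  refine ⟨lift '' D, hDc.image _, fun g => ?_⟩
  have hz : (r g) ∈ Set.range r := Set.mem_range_self g
  obtain ⟨d, hd, hdD⟩ := Metric.dense_iff.mp hDd ⟨r g, hz⟩ ε hε
  refine ⟨lift d, Set.mem_image_of_mem _ hdD, hsub ?_⟩
  intro x hx
  have hdist : dist (r (lift d)) (r g) < ε := by
    rw [hlift d]
    have : dist d (⟨r g, hz⟩ : Set.range r) < ε := Metric.mem_ball.mp hd
    simpa [Subtype.dist_eq, dist_comm] using this
  have := (ContinuousMap.dist_lt_iff hε).mp hdist ⟨x, hx⟩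
  exact hεV this
end
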